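/- The birational transformation s₁ : (q₁, p₁, q₂, p₂; α₁, α₂, α₃) ↦ (q₁ + α₂/p₁, p₁, q₂, p₂; α₁+2α₂, −α₂, α₃) leaves the Hamiltonian K₁ = q₁²p₁ − p₁² + α₂q₁ − q₂²p₂/2 − p₂²/2 − (α₃/2)q₂ + (3/2)p₁p₂ invariant as a rational function (for p₁ ≠ 0). -/

import Mathlib

/-- K₁ as a function of (q₁,p₁,q₂,p₂) with parameters α₂, α₃. -/
noncomputable def K1f (α₂ α₃ q₁ p₁ q₂ p₂ : ℂ) : ℂ :=
  q₁ ^ 2 * p₁ - p₁ ^ 2 + α₂ * q₁ - q₂ ^ 2 * p₂ / 2 - p₂ ^ 2 / 2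
    - α₃ / 2 * q₂ + 3 / 2 * p₁ * p₂

/-- K₂ as a function of (q₁,p₁,q₂,p₂) with parameters α₁, α₂, α₃. -/
noncomputable def K2f (α₁ α₂ α₃ q₁ p₁ q₂ p₂ : ℂ) : ℂ :=
  -α₃ ^ 2 * p₁ + q₂ ^ 4 * p₂ ^ 2 + 2 * q₂ ^ 2 * p₂ ^ 3 + p₂ ^ 4
    + 2 * α₃ * q₂ ^ 3 * p₂ + 4 * (α₁ + α₃) * q₂ * p₂ ^ 2 + α₃ ^ 2 * q₂ ^ 2
    + α₃ * (2 * α₁ + α₃) * p₂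
    - p₂ * (8 * q₁ * p₁ * q₂ * p₂ + 6 * p₁ * q₂ ^ 2 * p₂ + 4 * q₁ ^ 2 * p₁ * p₂
      + 2 * p₁ * p₂ ^ 2 - p₁ ^ 2 * p₂ + 4 * α₂ * q₁ * p₂ + 4 * α₃ * q₁ * p₁
      + 6 * α₃ * p₁ * q₂)

/-! The only part of K₁ involving q₁ or α₂ factors as p₁ · q₁ · (q₁ + α₂/p₁), and s₁ merely
exchanges the two factors q₁ and q₁ + α₂/p₁. -/

lemma K1f_eq_mul_add_K1f_zero (α₂ α₃ q₁ : ℂ) {p₁ : ℂ} (q₂ p₂ : ℂ) (hp₁ : p₁ ≠ 0) :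
    K1f α₂ α₃ q₁ p₁ q₂ p₂ = p₁ * q₁ * (q₁ + α₂ / p₁) + K1f 0 α₃ 0 p₁ q₂ p₂ := by
  unfold K1f
  field_simp
  ring

theorem s1_preserves_K1_general (α₂ α₃ q₁ p₁ q₂ p₂ : ℂ) (hp₁ : p₁ ≠ 0) :
    K1f (-α₂) α₃ (q₁ + α₂ / p₁) p₁ q₂ p₂ = K1f α₂ α₃ q₁ p₁ q₂ p₂ := by
  rw [K1f_eq_mul_add_K1f_zero (-α₂) α₃ _ q₂ p₂ hp₁, K1f_eq_mul_add_K1f_zero α₂ α₃ q₁ q₂ p₂ hp₁,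
    neg_div, add_neg_cancel_right]
  ring

/-- s₁ : (q₁,p₁,q₂,p₂;α₁,α₂,α₃) ↦ (q₁+α₂/p₁,p₁,q₂,p₂;α₁+2α₂,−α₂,α₃)
leaves K₁ invariant (for p₁ ≠ 0). -/
theorem s1_preserves_K1 (α₁ α₂ α₃ q₁ p₁ q₂ p₂ : ℂ)
    (hrel : 2 * α₁ + 2 * α₂ + α₃ = 0) (hp₁ : p₁ ≠ 0) :
    K1f (-α₂) α₃ (q₁ + α₂ / p₁) p₁ q₂ p₂ = K1f α₂ α₃ q₁ p₁ q₂ p₂ :=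
  s1_preserves_K1_general α₂ α₃ q₁ p₁ q₂ p₂ hp₁
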